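/- arXiv:2305.07098 — 3 statements merged into one kernel-verified Lean document; each statement's English description precedes it below -/
import Mathlib

section
/- Let n ≥ 1 and let w ∈ ℤ with w < −1. Let x', x ∈ {0,1}^n satisfy x'_1 = 0, x_1 = 1, and x ≠ 1^n. Then for every y ∈ {0,1}^n obtained from x by flipping exactly one bit, one has f_w(x,y) < f_w(x',x). Consequently the state (x',x) is absorbing for the time-linkage RLS on f_w, so started from (x',x) the RLS never reaches the global optimum. -/
open scoped Classical BigOperators ENNReal

noncomputable section

/-- Bitstrings of length `n`. -/
abbrev BitStr (n : ℕ) := Fin n → Bool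

/-- The number of one-bits of a bitstring. -/
def ones {n : ℕ} (x : BitStr n) : ℕ := (Finset.univ.filter fun i => x i = true).card

/-- The number of zero-bits of a bitstring. -/
def zeros {n : ℕ} (x : BitStr n) : ℕ := (Finset.univ.filter fun i => x i = false).card

/-- The first bit of a bitstring (`false` if `n = 0`). -/
def firstBit {n : ℕ} (x : BitStr n) : Bool := if h : 0 < n then x ⟨0, h⟩ else false

/-- The number of one-bits among the last `n-1` positions. -/
def onesTail {n : ℕ} (x : BitStr n) : ℕ :=
  (Finset.univ.filter fun i : Fin n => x i = true ∧ (i : ℕ) ≠ 0).card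

/-- The all-ones bitstring `1^n`. -/
def allOnes (n : ℕ) : BitStr n := fun _ => true

/-- The time-linkage OneMax function `f_w(x, y) = |y| + w·x₁`, where `x` is the
previous solution and `y` is the current one. -/
def fW {n : ℕ} (w : ℤ) (x y : BitStr n) : ℤ :=
  (ones y : ℤ) + (if firstBit x then w else 0)

/-- States of the time-linkage algorithms: (previous solution, current solution). -/
abbrev TLState (n : ℕ) := BitStr n × BitStr n

/-- Hamming distance between two bitstrings. -/
def hamming {n : ℕ} (x y : BitStr n) : ℕ := (Finset.univ.filter fun i => x i ≠ y i).card

/-- Standard bit-wise mutation, flipping each bit independently with probability `1/n`: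
`mutEA x y` is the probability that mutating `x` yields `y`. -/
def mutEA {n : ℕ} (x y : BitStr n) : ℝ :=
  (1 / n : ℝ) ^ hamming x y * (1 - 1 / n) ^ (n - hamming x y)

/-- RLS mutation, flipping exactly one bit chosen uniformly at random:
`mutRLS x y` is the probability that mutating `x` yields `y`. -/
def mutRLS {n : ℕ} (x y : BitStr n) : ℝ :=
  if hamming x y = 1 then (1 / n : ℝ) else 0

/-- Transition matrix of the time-linkage (1+1)-type algorithm with mutation
distribution `m` on `f_w`: at state `(x', x)`, an offspring `y` sampled from
`m x ·` is accepted (the state moving to `(x, y)`) iff `f_w(x, y) ≥ f_w(x', x)`;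
otherwise the state stays at `(x', x)`. -/
def tlTrans {n : ℕ} (m : BitStr n → BitStr n → ℝ) (w : ℤ) (s t : TLState n) : ℝ :=
  (∑ y : BitStr n, if fW w s.1 s.2 ≤ fW w s.2 y ∧ t = (s.2, y) then m s.2 y else 0) +
    if t = s then ∑ y : BitStr n, if ¬ fW w s.1 s.2 ≤ fW w s.2 y then m s.2 y else 0 else 0

/-- Transition matrix of the time-linkage (1+1) EA on `f_w`. -/
def transEA {n : ℕ} (w : ℤ) : TLState n → TLState n → ℝ := tlTrans mutEA w

/-- Transition matrix of the time-linkage RLS on `f_w`. -/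
def transRLS {n : ℕ} (w : ℤ) : TLState n → TLState n → ℝ := tlTrans mutRLS w

/-- Probability that the chain with transition matrix `P` started at `s`
visits a state in `E` within the first `T` steps (including time 0). -/
def hitWithin {n : ℕ} (P : TLState n → TLState n → ℝ) (E : TLState n → Prop) :
    ℕ → TLState n → ℝ
  | 0, s => if E s then 1 else 0
  | T + 1, s => if E s then 1 else ∑ t : TLState n, P s t * hitWithin P E T t

/-- Probability that the chain started at `s` ever visits a state in `E`. -/
def hitProb {n : ℕ} (P : TLState n → TLState n → ℝ) (E : TLState n → Prop)
    (s : TLState n) : ℝ := ⨆ T : ℕ, hitWithin P E T s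

/-- Probability that the chain started at `s` visits a state in `E` at some
time `≥ 1` (i.e. at a strictly later time). -/
def hitProbLater {n : ℕ} (P : TLState n → TLState n → ℝ) (E : TLState n → Prop)
    (s : TLState n) : ℝ := ⨆ T : ℕ, ∑ t : TLState n, P s t * hitWithin P E T t

/-- Probability that the chain started at `s` visits `A` within `T` steps
without having visited `B` strictly before (`A` has priority on common states). -/
def raceWithin {n : ℕ} (P : TLState n → TLState n → ℝ) (A B : TLState n → Prop) :
    ℕ → TLState n → ℝ
  | 0, s => if A s then 1 else 0
  | T + 1, s =>
      if A s then 1 else if B s then 0 else ∑ t : TLState n, P s t * raceWithin P A B T t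

/-- Probability that the chain started at `s` eventually visits `A` before `B`,
i.e. reaches `A` without having visited `B` strictly before. -/
def raceProb {n : ℕ} (P : TLState n → TLState n → ℝ) (A B : TLState n → Prop)
    (s : TLState n) : ℝ := ⨆ T : ℕ, raceWithin P A B T s

/-- Probability that the chain started at `s` enters the set `A` within `T`
steps and at the first entrance time is in `E`. -/
def firstHitInWithin {n : ℕ} (P : TLState n → TLState n → ℝ) (A E : TLState n → Prop) :
    ℕ → TLState n → ℝ
  | 0, s => if A s then (if E s then 1 else 0) else 0
  | T + 1, s =>
      if A s then (if E s then 1 else 0)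
      else ∑ t : TLState n, P s t * firstHitInWithin P A E T t

/-- Probability that the chain started at `s` eventually enters the set `A`
and at the first entrance time is in `E`. -/
def firstHitInProb {n : ℕ} (P : TLState n → TLState n → ℝ) (A E : TLState n → Prop)
    (s : TLState n) : ℝ := ⨆ T : ℕ, firstHitInWithin P A E T s

/-- Expected hitting time of `E` for the chain started at `s` (in `ℝ≥0∞`),
via `E[τ] = ∑_{T ≥ 0} P[τ > T]`. -/
def expHitTime {n : ℕ} (P : TLState n → TLState n → ℝ) (E : TLState n → Prop)
    (s : TLState n) : ℝ≥0∞ := ∑' T : ℕ, ENNReal.ofReal (1 - hitWithin P E T s)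

/-- Probability that the chain started at `s` never visits a state in `B`. -/
def avoidProb {n : ℕ} (P : TLState n → TLState n → ℝ) (B : TLState n → Prop)
    (s : TLState n) : ℝ := 1 - hitProb P B s

/-- `E[τ_E · 1_{B is never visited}]` for the chain started at `s` (in `ℝ≥0∞`),
using `P[τ_E > T and B never visited] = P[B never visited] − P[E hit within T
steps, avoiding B]`, which is valid whenever `B` cannot be visited anymore once
`E` has been reached. -/
def expHitTimeAvoid {n : ℕ} (P : TLState n → TLState n → ℝ) (E B : TLState n → Prop)
    (s : TLState n) : ℝ≥0∞ :=
  ∑' T : ℕ, ENNReal.ofReal (avoidProb P B s - raceWithin P E B T s)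

/-- The global optimum for negative weight `w < 0`: the current solution is
`1^n` and the stored previous first bit is `0`. -/
def OptNeg {n : ℕ} (s : TLState n) : Prop := s.2 = allOnes n ∧ firstBit s.1 = false

/-- The global optimum for positive weight `w > 0`: the current solution is
`1^n` and the stored previous first bit is `1`. -/
def OptPos {n : ℕ} (s : TLState n) : Prop := s.2 = allOnes n ∧ firstBit s.1 = true

/-- Event I for the (1+1) EA (for `w < -1`): first bit pattern `(0,1)`,
current solution not `1^n`, and `|x_{[2..n]}| ≥ w + n`. -/
def EventIEA {n : ℕ} (w : ℤ) (s : TLState n) : Prop :=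
  firstBit s.1 = false ∧ firstBit s.2 = true ∧ s.2 ≠ allOnes n ∧
    w + n ≤ (onesTail s.2 : ℤ)

/-- Event I for the RLS (for `w < -1`): first bit pattern `(0,1)` and the
current solution is not `1^n`. -/
def EventIRLS {n : ℕ} (s : TLState n) : Prop :=
  firstBit s.1 = false ∧ firstBit s.2 = true ∧ s.2 ≠ allOnes n

/-- Event II: the current solution is `1^n` and the stored first bit is `1`. -/
def EventII {n : ℕ} (s : TLState n) : Prop :=
  firstBit s.1 = true ∧ s.2 = allOnes n

/-- Event III for the (1+1) EA (for `w > 0`): first bit pattern `(1,0)` and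
`|x_{[2..n]}| ≥ n - w + 1`. -/
def EventIIIEA {n : ℕ} (w : ℤ) (s : TLState n) : Prop :=
  firstBit s.1 = true ∧ firstBit s.2 = false ∧ (n : ℤ) - w + 1 ≤ (onesTail s.2 : ℤ)

/-- Event III for the RLS (for `w > 1`): first bit pattern `(1,0)`. -/
def EventIIIRLS {n : ℕ} (s : TLState n) : Prop :=
  firstBit s.1 = true ∧ firstBit s.2 = false

/-- Euler's number `e`. -/
def eu : ℝ := Real.exp 1

end

/-!
At a state `(x', x)` with `x'₁ = 0` and `x₁ = 1` the current fitness is `f_w(x', x) = |x|`,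
while a one-bit offspring `y` of `x` has `f_w(x, y) = |y| + w ≤ |x| + 1 + w < |x|` because
`w < -1`. Every move of the RLS is therefore rejected, the state is a fixed point of the
transition kernel, and as `x ≠ 1^n` it is not optimal, so the optimum is never hit.
-/

open Finset

section Bitstrings

variable {n : ℕ}

def flipBit (x : BitStr n) (i : Fin n) : BitStr n := Function.update x i (!x i)

lemma pos_of_firstBit_eq_true {x : BitStr n} (hx : firstBit x = true) : 0 < n := by
  by_contra h
  simp [firstBit, h] at hx

lemma ones_le_ones_add_hamming (x y : BitStr n) : ones y ≤ ones x + hamming x y := by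
  calc ones y ≤ #(univ.filter (x · = true) ∪ univ.filter fun i => x i ≠ y i) := by
        refine card_le_card fun i hi => ?_
        simp only [mem_filter, mem_univ, true_and, mem_union] at hi ⊢
        cases h : x i <;> simp_all
    _ ≤ ones x + hamming x y := card_union_le _ _

lemma hamming_eq_one_iff {x y : BitStr n} : hamming x y = 1 ↔ ∃ i, flipBit x i = y := by
  constructor
  · intro h
    obtain ⟨i, hi⟩ := card_eq_one.mp h
    refine ⟨i, funext fun j => ?_⟩
    have hj := congrArg (j ∈ ·) hi
    simp only [mem_filter, mem_univ, true_and, mem_singleton, eq_iff_iff] at hj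
    by_cases hji : j = i
    · subst hji
      cases hxj : x j <;> cases hyj : y j <;> simp_all [flipBit]
    · simp_all [flipBit]
  · rintro ⟨i, rfl⟩
    rw [hamming, card_eq_one]
    refine ⟨i, ext fun j => ?_⟩
    by_cases hji : j = i <;> simp [flipBit, Function.update_apply, hji]

lemma flipBit_injective (x : BitStr n) : Function.Injective (flipBit x) := by
  intro i j hij
  by_contra hne
  have := congrFun hij i
  simp [flipBit, hne] at this

lemma card_hamming_eq_one (x : BitStr n) : #{y | hamming x y = 1} = n := by
  have himage : ({y | hamming x y = 1} : Finset (BitStr n)) = univ.image (flipBit x) := by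
    ext y
    simp [hamming_eq_one_iff]
  rw [himage, card_image_of_injective _ (flipBit_injective x), card_univ, Fintype.card_fin]

lemma sum_mutRLS (hn : 0 < n) (x : BitStr n) : ∑ y, mutRLS x y = 1 := by
  simp only [mutRLS]
  rw [← sum_filter, sum_const, card_hamming_eq_one, nsmul_eq_mul]
  field_simp

lemma fW_lt_of_hamming_eq_one {w : ℤ} (hw : w < -1) {x' x y : BitStr n}
    (hx' : firstBit x' = false) (hx : firstBit x = true) (hxy : hamming x y = 1) :
    fW w x y < fW w x' x := by
  have := ones_le_ones_add_hamming x y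
  simp only [fW, hx, hx', if_true, Bool.false_eq_true, if_false]
  omega

end Bitstrings

section Chains

variable {n : ℕ}

lemma tlTrans_eq_of_forall_reject {m : BitStr n → BitStr n → ℝ} {w : ℤ} {s : TLState n}
    (hm : ∑ y, m s.2 y = 1) (hreject : ∀ y, m s.2 y ≠ 0 → fW w s.2 y < fW w s.1 s.2)
    (t : TLState n) : tlTrans m w s t = if t = s then 1 else 0 := by
  have hmove :
      ∀ y, (if fW w s.1 s.2 ≤ fW w s.2 y ∧ t = (s.2, y) then m s.2 y else 0) = 0 := by
    intro y
    split_ifs with h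
    · by_contra hy
      exact (hreject y hy).not_ge h.1
    · rfl
  have hstay : ∀ y, (if ¬ fW w s.1 s.2 ≤ fW w s.2 y then m s.2 y else 0) = m s.2 y := by
    intro y
    by_cases hy : m s.2 y = 0
    · simp [hy]
    · exact if_pos (not_le.2 (hreject y hy))
  simp only [tlTrans, hmove, hstay, sum_const_zero, zero_add, hm]

lemma hitWithin_eq_zero_of_absorbing {P : TLState n → TLState n → ℝ} {E : TLState n → Prop}
    {s : TLState n} (habs : ∀ t, P s t = if t = s then 1 else 0) (hs : ¬ E s) :
    ∀ T, hitWithin P E T s = 0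
  | 0 => by simp [hitWithin, hs]
  | T + 1 => by simp [hitWithin, hs, habs, hitWithin_eq_zero_of_absorbing habs hs T]

lemma hitProb_eq_zero_of_absorbing {P : TLState n → TLState n → ℝ} {E : TLState n → Prop}
    {s : TLState n} (habs : ∀ t, P s t = if t = s then 1 else 0) (hs : ¬ E s) :
    hitProb P E s = 0 := by
  simp [hitProb, hitWithin_eq_zero_of_absorbing habs hs]

end Chains

theorem stmt1_general (n : ℕ) (w : ℤ) (hw : w < -1)
    (x' x : BitStr n) (hx' : firstBit x' = false) (hx : firstBit x = true)
    (hxne : x ≠ allOnes n) :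
    (∀ y : BitStr n, hamming x y = 1 → fW w x y < fW w x' x) ∧
    (∀ t : TLState n, transRLS w (x', x) t = if t = (x', x) then 1 else 0) ∧
    hitProb (transRLS w) (OptNeg (n := n)) (x', x) = 0 := by
  have hfit : ∀ y : BitStr n, hamming x y = 1 → fW w x y < fW w x' x :=
    fun y => fW_lt_of_hamming_eq_one hw hx' hx
  have habs : ∀ t : TLState n, transRLS w (x', x) t = if t = (x', x) then 1 else 0 := by
    refine tlTrans_eq_of_forall_reject (sum_mutRLS (pos_of_firstBit_eq_true hx) x) ?_
    exact fun y hy => hfit y (by_contra fun h => hy (if_neg h))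
  exact ⟨hfit, habs, hitProb_eq_zero_of_absorbing habs fun h => hxne h.1⟩

/-- For `w < -1`, a state `(x', x)` with first bit pattern
`(0, 1)` and `x ≠ 1^n` has strictly better fitness than any offspring obtained
from `x` by flipping exactly one bit, hence it is absorbing for the
time-linkage RLS on `f_w`, and the RLS started there never reaches the global
optimum. -/
theorem stmt1 (n : ℕ) (hn : 1 ≤ n) (w : ℤ) (hw : w < -1)
    (x' x : BitStr n) (hx' : firstBit x' = false) (hx : firstBit x = true)
    (hxne : x ≠ allOnes n) :
    (∀ y : BitStr n, hamming x y = 1 → fW w x y < fW w x' x) ∧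
    (∀ t : TLState n, transRLS w (x', x) t = if t = (x', x) then 1 else 0) ∧
    hitProb (transRLS w) (OptNeg (n := n)) (x', x) = 0 :=
  stmt1_general n w hw x' x hx' hx hxne
end

section
/- Let n ≥ 1 and w ∈ ℤ. Let x' ∈ {0,1}^n with x'_1 = 1. Then for every y ∈ {0,1}^n one has f_w(1^n, y) ≤ f_w(x', 1^n), with equality if and only if y = 1^n. Consequently, once the time-linkage RLS or (1+1) EA on f_w is in a state (x',1^n) with x'_1 = 1, every accepted offspring equals 1^n, all later states are of the form (z,1^n) with z_1 = 1, and hence for w < 0 the algorithm never reaches the global optimum afterwards. -/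
/-! The fitness of `(x', 1^n)` with `x'_1 = 1` is `n + w`, while every offspring `y` of `1^n` is
evaluated as `|y| + w` because its predecessor `1^n` has first bit `1`. So only `y = 1^n` is
accepted, the set of states `(z, 1^n)` with `z_1 = 1` is closed under both chains, and it is
disjoint from the optimum for `w < 0`, which therefore has hitting probability `0`. -/

open scoped Classical BigOperators ENNReal

section Bitstrings

variable {n : ℕ}

lemma ones_le (x : BitStr n) : ones x ≤ n :=
  (Finset.card_filter_le _ _).trans_eq (Finset.card_fin n)

lemma ones_allOnes (n : ℕ) : ones (allOnes n) = n := by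
  simp [ones, allOnes]

lemma eq_allOnes_of_le_ones {x : BitStr n} (h : n ≤ ones x) : x = allOnes n := by
  have hfull : (Finset.univ.filter fun i => x i = true) = Finset.univ :=
    Finset.eq_univ_of_card _ (le_antisymm (ones_le x) h |>.trans (Finset.card_fin n).symm)
  funext i
  simpa [allOnes] using Finset.eq_univ_iff_forall.mp hfull i

lemma firstBit_allOnes (hn : 1 ≤ n) : firstBit (allOnes n) = true := by
  simp [firstBit, allOnes, show 0 < n from hn]

lemma fW_of_firstBit_eq_true (w : ℤ) {x : BitStr n} (hx : firstBit x = true) (y : BitStr n) :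
    fW w x y = ones y + w := by
  simp [fW, hx]

end Bitstrings

section Fitness

variable {n : ℕ} (w : ℤ) {x' : BitStr n}

lemma fW_allOnes_offspring_le (hn : 1 ≤ n) (hx' : firstBit x' = true) (y : BitStr n) :
    fW w (allOnes n) y ≤ fW w x' (allOnes n) := by
  rw [fW_of_firstBit_eq_true w (firstBit_allOnes hn), fW_of_firstBit_eq_true w hx', ones_allOnes]
  have := ones_le y
  omega

lemma eq_allOnes_of_fW_le (hn : 1 ≤ n) (hx' : firstBit x' = true) {y : BitStr n}
    (h : fW w x' (allOnes n) ≤ fW w (allOnes n) y) : y = allOnes n := by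
  rw [fW_of_firstBit_eq_true w (firstBit_allOnes hn), fW_of_firstBit_eq_true w hx',
    ones_allOnes] at h
  exact eq_allOnes_of_le_ones (by omega)

lemma fW_allOnes_offspring_eq_iff (hn : 1 ≤ n) (hx' : firstBit x' = true) (y : BitStr n) :
    fW w (allOnes n) y = fW w x' (allOnes n) ↔ y = allOnes n := by
  refine ⟨fun h => eq_allOnes_of_fW_le w hn hx' h.ge, ?_⟩
  rintro rfl
  rw [fW_of_firstBit_eq_true w (firstBit_allOnes hn), fW_of_firstBit_eq_true w hx']

end Fitness

section Chain

variable {n : ℕ}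

lemma eq_or_accepted_of_tlTrans_ne_zero {m : BitStr n → BitStr n → ℝ} {w : ℤ}
    {s t : TLState n} (h : tlTrans m w s t ≠ 0) :
    t = s ∨ ∃ y, fW w s.1 s.2 ≤ fW w s.2 y ∧ t = (s.2, y) := by
  by_contra! hcon
  obtain ⟨hts, hacc⟩ := hcon
  refine h ?_
  rw [tlTrans, if_neg hts, add_zero]
  exact Finset.sum_eq_zero fun y _ => if_neg fun hy => hacc y hy.1 hy.2

lemma eventII_of_tlTrans_ne_zero (hn : 1 ≤ n) {m : BitStr n → BitStr n → ℝ} {w : ℤ}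
    {s t : TLState n} (hs : EventII s) (h : tlTrans m w s t ≠ 0) : EventII t := by
  obtain ⟨hs1, hs2⟩ := hs
  rcases eq_or_accepted_of_tlTrans_ne_zero h with rfl | ⟨y, hy, rfl⟩
  · exact ⟨hs1, hs2⟩
  · rw [hs2] at hy ⊢
    exact ⟨firstBit_allOnes hn, eq_allOnes_of_fW_le w hn hs1 hy⟩

lemma hitWithin_eq_zero_of_closed {P : TLState n → TLState n → ℝ} {C E : TLState n → Prop}
    (hstep : ∀ s t, C s → P s t ≠ 0 → C t) (hCE : ∀ s, C s → ¬ E s) :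
    ∀ (T : ℕ) (s : TLState n), C s → hitWithin P E T s = 0
  | 0, s, hs => by simp [hitWithin, hCE s hs]
  | T + 1, s, hs => by
    rw [hitWithin, if_neg (hCE s hs)]
    refine Finset.sum_eq_zero fun t _ => ?_
    by_cases hPt : P s t = 0
    · rw [hPt, zero_mul]
    · rw [hitWithin_eq_zero_of_closed hstep hCE T t (hstep s t hs hPt), mul_zero]

lemma hitProb_eq_zero_of_closed {P : TLState n → TLState n → ℝ} {C E : TLState n → Prop}
    (hstep : ∀ s t, C s → P s t ≠ 0 → C t) (hCE : ∀ s, C s → ¬ E s) {s : TLState n}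
    (hs : C s) : hitProb P E s = 0 := by
  simp [hitProb, hitWithin_eq_zero_of_closed hstep hCE _ s hs]

lemma not_optNeg_of_eventII {s : TLState n} (hs : EventII s) : ¬ OptNeg s := fun h =>
  nomatch hs.1.symm.trans h.2

lemma hitProb_optNeg_eq_zero (hn : 1 ≤ n) (m : BitStr n → BitStr n → ℝ) (w : ℤ)
    {s : TLState n} (hs : EventII s) : hitProb (tlTrans m w) OptNeg s = 0 :=
  hitProb_eq_zero_of_closed (C := EventII)
    (fun _ _ hs h => eventII_of_tlTrans_ne_zero (m := m) (w := w) hn hs h)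
    (fun _ => not_optNeg_of_eventII) hs

end Chain

/-- For any `w ∈ ℤ` and any `x'` with `x'_1 = 1`, every
offspring `y` satisfies `f_w(1^n, y) ≤ f_w(x', 1^n)`, with equality iff
`y = 1^n`. Consequently, from any state `(x', 1^n)` with `x'_1 = 1` every
accepted offspring equals `1^n`, the set of states `(z, 1^n)` with `z_1 = 1`
is closed under the transitions of both the time-linkage RLS and (1+1) EA,
and for `w < 0` neither algorithm ever reaches the global optimum afterwards. -/
theorem stmt2 (n : ℕ) (hn : 1 ≤ n) (w : ℤ) (x' : BitStr n)
    (hx' : firstBit x' = true) :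
    (∀ y : BitStr n, fW w (allOnes n) y ≤ fW w x' (allOnes n) ∧
      (fW w (allOnes n) y = fW w x' (allOnes n) ↔ y = allOnes n)) ∧
    (∀ y : BitStr n, fW w x' (allOnes n) ≤ fW w (allOnes n) y → y = allOnes n) ∧
    (∀ P ∈ ({transEA (n := n) w, transRLS (n := n) w} :
        Set (TLState n → TLState n → ℝ)),
      ∀ s : TLState n, s.2 = allOnes n → firstBit s.1 = true →
        ∀ t : TLState n, P s t ≠ 0 → t.2 = allOnes n ∧ firstBit t.1 = true) ∧
    (w < 0 →
      hitProb (transEA w) (OptNeg (n := n)) (x', allOnes n) = 0 ∧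
      hitProb (transRLS w) (OptNeg (n := n)) (x', allOnes n) = 0) := by
  have hstart : EventII (x', allOnes n) := ⟨hx', rfl⟩
  refine ⟨fun y => ⟨fW_allOnes_offspring_le w hn hx' y, fW_allOnes_offspring_eq_iff w hn hx' y⟩,
    fun _ => eq_allOnes_of_fW_le w hn hx', ?_, fun _ =>
    ⟨hitProb_optNeg_eq_zero hn mutEA w hstart, hitProb_optNeg_eq_zero hn mutRLS w hstart⟩⟩
  rintro P (rfl | rfl) s hs2 hs1 t hPt <;>
    exact (eventII_of_tlTrans_ne_zero hn ⟨hs1, hs2⟩ hPt).symm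
end

section
/- Let b, c ∈ (0, 1/2) be constants, let n ≥ max{2^{1/c}, 4^e} be large enough that e·(log₂ n)² ≤ n^c, and let w ∈ ℤ with −n ≤ w ≤ −1. Consider the time-linkage RLS or (1+1) EA on f_w, conditioned on the initial current solution satisfying |X^1| > b·n. Then with probability at least 1 − 17·log₂ n / n, the chain does not reach the global optimum strictly before the first time at which the number of zero-bits of the current solution is less than n^c. -/
open scoped Classical BigOperators ENNReal

/-!
The optimum `(x', 1^n)` with `x'₁ = 0` can only be entered in one step, by mutating a current
solution with first bit `0` directly into `1^n`. As long as the current solution has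
`k ≥ n^c ≥ 2` zeros, RLS cannot do this at all, and for the (1+1) EA flipping all `k` zeros is
`n - 1` times less likely than flipping all but one of them; that offspring is accepted (its
fitness exceeds the parent's when `w < 0`) and its single zero is already below the threshold
`n^c`. Hence from any state above the threshold the chain crosses it at the optimum with
probability at most `1/(n-1)`. Among the at least `2^(2n-1)` conditioned initial states at most
`2^n` are optimal themselves, so the failure probability is at most `1/n + 2/n ≤ 17 log₂ n / n`.
-/

open Finset

variable {n : ℕ}

lemma ones_add_zeros (x : BitStr n) : ones x + zeros x = n := by
  simpa [ones, zeros, Bool.not_eq_true] using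
    card_filter_add_card_filter_not (s := (univ : Finset (Fin n))) (p := fun i => x i = true)

lemma zeros_le (x : BitStr n) : zeros x ≤ n := by
  have := ones_add_zeros x
  omega

lemma ones_not (x : BitStr n) : ones (fun i => !x i) = zeros x := by
  simp [ones, zeros]

lemma hamming_allOnes (x : BitStr n) : hamming x (allOnes n) = zeros x := by
  simp [hamming, allOnes, zeros, Bool.not_eq_true]

lemma zeros_update_allOnes (j : Fin n) : zeros (Function.update (allOnes n) j false) = 1 := by
  simp [zeros, allOnes, Function.update_apply, filter_eq']

lemma hamming_update_allOnes {x : BitStr n} {j : Fin n} (hj : x j = false) :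
    hamming x (Function.update (allOnes n) j false) + 1 = zeros x := by
  have hset : univ.filter (fun i => x i ≠ Function.update (allOnes n) j false i)
      = (univ.filter fun i => x i = false).erase j := by
    ext i
    by_cases h : i = j
    · simp [h, hj]
    · cases hxi : x i <;> simp [h, hxi, allOnes]
  rw [hamming, hset, card_erase_of_mem (by simpa using hj), zeros]
  have : 0 < (univ.filter fun i => x i = false).card := card_pos.2 ⟨j, by simpa using hj⟩
  omega

/-- Complementation maps the strings with at most `b n` ones into those with more. -/
lemma two_pow_le_two_mul_card_ones_gt (hn : 0 < n) {b : ℝ} (hb : b < 1 / 2) :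
    2 ^ n ≤ 2 * (univ.filter fun x : BitStr n => b * n < ones x).card := by
  have hcompl : (univ.filter fun x : BitStr n => ¬ b * n < ones x).card ≤
      (univ.filter fun x : BitStr n => b * n < ones x).card := by
    refine card_le_card_of_injOn (fun x i => !x i) (fun x hx => ?_) (fun x _ y _ h => ?_)
    · have hx : (ones x : ℝ) ≤ b * n := not_lt.1 (mem_filter.1 hx).2
      have hsum : (ones x : ℝ) + zeros x = n := by exact_mod_cast ones_add_zeros x
      have : b * n < 1 / 2 * (n : ℝ) := mul_lt_mul_of_pos_right hb (by exact_mod_cast hn)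
      simp only [coe_filter, mem_univ, true_and, Set.mem_ofPred_eq, ones_not]
      linarith
    · funext i
      simpa using congrFun h i
  have htotal := card_filter_add_card_filter_not (s := (univ : Finset (BitStr n)))
    (p := fun x => b * n < ones x)
  simp only [card_univ, Fintype.card_fun, Fintype.card_bool, Fintype.card_fin] at htotal
  omega

structure IsSubstochastic {α : Type*} [Fintype α] (P : α → α → ℝ) : Prop where
  nonneg : ∀ s t, 0 ≤ P s t
  sum_le_one : ∀ s, ∑ t, P s t ≤ 1

lemma mutEA_eq_prod (x y : BitStr n) :
    mutEA x y = ∏ i, if y i = x i then 1 - 1 / (n : ℝ) else 1 / n := by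
  have hdiff : (univ.filter fun i => ¬ y i = x i).card = hamming x y := by
    simp only [hamming, ne_comm (a := x _)]
  have hsame : (univ.filter fun i => y i = x i).card = n - hamming x y := by
    have h := card_filter_add_card_filter_not (s := (univ : Finset (Fin n)))
      (p := fun i => y i = x i)
    simp only [card_univ, Fintype.card_fin] at h
    omega
  rw [prod_ite, prod_const, prod_const, hdiff, hsame, mutEA, mul_comm]

lemma sum_mutEA (x : BitStr n) : ∑ y, mutEA x y = 1 := by
  simp_rw [mutEA_eq_prod,
    ← Fintype.prod_sum fun i b => if b = x i then 1 - 1 / (n : ℝ) else 1 / n, Fintype.sum_bool]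
  exact prod_eq_one fun i _ => by cases x i <;> simp

lemma mutEA_eq_of_hamming_eq_succ (hn : 2 ≤ n) {x y z : BitStr n}
    (h : hamming x z = hamming x y + 1) : mutEA x z = 1 / ((n : ℝ) - 1) * mutEA x y := by
  have hle : hamming x z ≤ n := (card_filter_le _ _).trans_eq (card_fin n)
  have hn' : (n : ℝ) - 1 ≠ 0 := by
    have : (2 : ℝ) ≤ n := by exact_mod_cast hn
    linarith
  rw [mutEA, mutEA, h, show n - hamming x y = n - (hamming x y + 1) + 1 by omega, pow_succ,
    pow_succ]
  field_simp

lemma isSubstochastic_mutEA : IsSubstochastic (mutEA (n := n)) where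
  nonneg x y := by
    have : 1 / (n : ℝ) ≤ 1 := by simpa using Nat.cast_inv_le_one (α := ℝ) n
    unfold mutEA
    exact mul_nonneg (by positivity) (pow_nonneg (by linarith) _)
  sum_le_one x := (sum_mutEA x).le

lemma card_hamming_eq_one_le (x : BitStr n) :
    (univ.filter fun y : BitStr n => hamming x y = 1).card ≤ n := by
  have hsub : univ.filter (fun y : BitStr n => hamming x y = 1) ⊆
      univ.image fun i => Function.update x i (!x i) := by
    intro y hy
    obtain ⟨j, hj⟩ := card_eq_one.1 (mem_filter.1 hy).2
    have hdiff : ∀ i, x i ≠ y i ↔ i = j := fun i => by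
      simpa using congrArg (i ∈ ·) hj
    refine mem_image.2 ⟨j, mem_univ _, funext fun i => ?_⟩
    by_cases hij : i = j
    · subst hij
      have := (hdiff i).2 rfl
      cases hx : x i <;> cases hy : y i <;> simp_all
    · rw [Function.update_of_ne hij]
      exact not_not.1 (mt (hdiff i).1 hij)
  exact (card_le_card hsub).trans (card_image_le.trans (by simp))

lemma isSubstochastic_mutRLS : IsSubstochastic (mutRLS (n := n)) where
  nonneg x y := by unfold mutRLS; split <;> positivity
  sum_le_one x := by
    have hsum : ∑ y : BitStr n, mutRLS x y
        = (univ.filter fun y : BitStr n => hamming x y = 1).card * (1 / n : ℝ) := by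
      simp only [mutRLS, ← sum_filter, sum_const, nsmul_eq_mul]
    rw [hsum]
    calc _ ≤ (n : ℝ) * (1 / n) := by gcongr; exact_mod_cast card_hamming_eq_one_le x
      _ ≤ 1 := by rw [mul_one_div]; exact div_self_le_one _

section TimeLinkage

variable {m : BitStr n → BitStr n → ℝ} {w : ℤ}

lemma tlTrans_of_ne {s t : TLState n} (h : t ≠ s) :
    tlTrans m w s t = if t.1 = s.2 ∧ fW w s.1 s.2 ≤ fW w s.2 t.2 then m s.2 t.2 else 0 := by
  rw [tlTrans, if_neg h, add_zero, sum_eq_single t.2]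
  · exact if_congr (by rw [Prod.ext_iff]; tauto) rfl rfl
  · rintro y - hy
    exact if_neg fun hc => hy (by rw [hc.2])
  · simp

lemma sum_tlTrans (s : TLState n) : ∑ t, tlTrans m w s t = ∑ y, m s.2 y := by
  have hmove : ∀ y, ∑ t : TLState n,
      (if fW w s.1 s.2 ≤ fW w s.2 y ∧ t = (s.2, y) then m s.2 y else 0)
        = if fW w s.1 s.2 ≤ fW w s.2 y then m s.2 y else 0 := fun y => by
    simp_rw [ite_and]
    split_ifs <;> simp
  simp only [tlTrans, sum_add_distrib]
  rw [sum_comm, sum_congr rfl fun y _ => hmove y, sum_ite_eq', if_pos (mem_univ _),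
    ← sum_add_distrib]
  exact sum_congr rfl fun y _ => by split_ifs <;> simp

lemma IsSubstochastic.tlTrans (hm : IsSubstochastic m) (w : ℤ) :
    IsSubstochastic (tlTrans m w) where
  nonneg _ _ :=
    add_nonneg (sum_nonneg fun _ _ => ite_nonneg (hm.nonneg _ _) le_rfl)
      (ite_nonneg (sum_nonneg fun _ _ => ite_nonneg (hm.nonneg _ _) le_rfl) le_rfl)
  sum_le_one s := (sum_tlTrans s).trans_le (hm.sum_le_one s.2)

end TimeLinkage

section Hitting

variable {P : TLState n → TLState n → ℝ} {A E : TLState n → Prop}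

lemma hitWithin_of_mem {s : TLState n} (h : E s) (T : ℕ) : hitWithin P E T s = 1 := by
  cases T <;> simp [hitWithin, h]

lemma IsSubstochastic.hitWithin_le_one (hP : IsSubstochastic P) (T : ℕ) (s : TLState n) :
    hitWithin P E T s ≤ 1 := by
  induction T generalizing s with
  | zero => simp only [hitWithin]; split_ifs <;> norm_num
  | succ T ih =>
    simp only [hitWithin]
    split_ifs
    · exact le_rfl
    · calc ∑ t, P s t * hitWithin P E T t ≤ ∑ t, P s t :=
            sum_le_sum fun t _ => mul_le_of_le_one_right (hP.nonneg s t) (ih t)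
        _ ≤ 1 := hP.sum_le_one s

lemma firstHitInWithin_of_mem {s : TLState n} (h : A s) (T : ℕ) :
    firstHitInWithin P A E T s = if E s then 1 else 0 := by
  cases T <;> simp [firstHitInWithin, h]

lemma firstHitInWithin_le_mul_hitWithin {ρ : ℝ} (hP : ∀ s t, 0 ≤ P s t)
    (hstep : ∀ s, ¬ A s →
      ∑ t ∈ univ.filter (fun t => A t ∧ E t), P s t ≤ ρ * ∑ t ∈ univ.filter A, P s t)
    (T : ℕ) {s : TLState n} (hs : ¬ A s) :
    firstHitInWithin P A E T s ≤ ρ * hitWithin P A T s := by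
  induction T generalizing s with
  | zero => simp [firstHitInWithin, hitWithin, hs]
  | succ T ih =>
    rw [firstHitInWithin, hitWithin, if_neg hs, if_neg hs,
      ← sum_filter_add_sum_filter_not univ A, ← sum_filter_add_sum_filter_not univ A, mul_add]
    gcongr ?_ + ?_
    · calc ∑ t ∈ univ.filter A, P s t * firstHitInWithin P A E T t
          = ∑ t ∈ univ.filter (fun t => A t ∧ E t), P s t := by
            rw [← filter_filter, sum_filter E]
            refine sum_congr rfl fun t ht => ?_
            rw [firstHitInWithin_of_mem (mem_filter.1 ht).2]
            split_ifs <;> simp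
        _ ≤ ρ * ∑ t ∈ univ.filter A, P s t := hstep s hs
        _ = ρ * ∑ t ∈ univ.filter A, P s t * hitWithin P A T t := by
            congr 1
            exact sum_congr rfl fun t ht => by rw [hitWithin_of_mem (mem_filter.1 ht).2, mul_one]
    · rw [mul_sum]
      refine sum_le_sum fun t ht => ?_
      rw [mul_left_comm]
      exact mul_le_mul_of_nonneg_left (ih (mem_filter.1 ht).2) (hP s t)

lemma IsSubstochastic.firstHitInProb_le {ρ : ℝ} (hP : IsSubstochastic P) (hρ : 0 ≤ ρ)
    (hstep : ∀ s, ¬ A s →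
      ∑ t ∈ univ.filter (fun t => A t ∧ E t), P s t ≤ ρ * ∑ t ∈ univ.filter A, P s t)
    (s : TLState n) :
    firstHitInProb P A E s ≤ (if E s then 1 else 0) + ρ := by
  refine ciSup_le fun T => ?_
  by_cases hs : A s
  · rw [firstHitInWithin_of_mem hs]
    exact le_add_of_nonneg_right hρ
  · calc firstHitInWithin P A E T s ≤ ρ * hitWithin P A T s :=
          firstHitInWithin_le_mul_hitWithin hP.nonneg hstep T hs
      _ ≤ ρ := mul_le_of_le_one_right hρ (hP.hitWithin_le_one T s)
      _ ≤ _ := le_add_of_nonneg_left (by split_ifs <;> norm_num)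

end Hitting

section Optimum

variable {w : ℤ} {A : TLState n → Prop}

lemma sum_tlTrans_optNeg_le {m : BitStr n → BitStr n → ℝ} (hm : ∀ x y, 0 ≤ m x y)
    {s : TLState n} (hs : ¬ A s) :
    ∑ t ∈ univ.filter (fun t => A t ∧ OptNeg t), tlTrans m w s t
      ≤ if firstBit s.2 = false then m s.2 (allOnes n) else 0 := by
  set v := if firstBit s.2 = false then m s.2 (allOnes n) else 0
  have hv : 0 ≤ v := ite_nonneg (hm _ _) le_rfl
  have hterm : ∀ t ∈ univ.filter (fun t => A t ∧ OptNeg t),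
      tlTrans m w s t ≤ if t = (s.2, allOnes n) then v else 0 := by
    intro t ht
    obtain ⟨hA, hall, hfirst⟩ : A t ∧ t.2 = allOnes n ∧ firstBit t.1 = false := by
      simpa [OptNeg] using (mem_filter.1 ht).2
    have hne : t ≠ s := fun h => hs (h ▸ hA)
    rw [tlTrans_of_ne hne]
    split_ifs with hmove ht1
    · subst ht1
      simp [v, hfirst]
    · exact absurd (Prod.ext hmove.1 hall) ht1
    · exact ite_nonneg (hm _ _) le_rfl
    · exact le_rfl
  calc _ ≤ ∑ t ∈ univ.filter (fun t => A t ∧ OptNeg t),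
          if t = (s.2, allOnes n) then v else 0 := sum_le_sum hterm
    _ ≤ ∑ t, if t = (s.2, allOnes n) then v else 0 :=
        sum_le_sum_of_subset_of_nonneg (subset_univ _) fun _ _ _ => ite_nonneg hv le_rfl
    _ = v := by simp

lemma sum_transRLS_optNeg_nonpos {s : TLState n} (hs : ¬ A s) (hk : 2 ≤ zeros s.2) :
    ∑ t ∈ univ.filter (fun t => A t ∧ OptNeg t), transRLS w s t ≤ 0 := by
  refine (sum_tlTrans_optNeg_le isSubstochastic_mutRLS.nonneg hs).trans ?_
  have : mutRLS s.2 (allOnes n) = 0 := by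
    rw [mutRLS, hamming_allOnes, if_neg (by omega)]
  split_ifs <;> simp [this]

lemma sum_transEA_optNeg_le (hw : w ≤ 0) (hA : ∀ t : TLState n, zeros t.2 ≤ 1 → A t)
    {s : TLState n} (hs : ¬ A s) (hk : 2 ≤ zeros s.2) :
    ∑ t ∈ univ.filter (fun t => A t ∧ OptNeg t), transEA w s t
      ≤ 1 / ((n : ℝ) - 1) * ∑ t ∈ univ.filter A, transEA w s t := by
  have hn : 2 ≤ n := hk.trans (zeros_le s.2)
  have hρ : 0 ≤ 1 / ((n : ℝ) - 1) :=
    one_div_nonneg.2 (sub_nonneg.2 (Nat.one_le_cast.2 (by omega)))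
  have hP := isSubstochastic_mutEA.tlTrans (n := n) w
  refine (sum_tlTrans_optNeg_le isSubstochastic_mutEA.nonneg hs).trans ?_
  split_ifs with hfirst
  swap
  · exact mul_nonneg hρ (sum_nonneg fun t _ => hP.nonneg s t)
  obtain ⟨j, hj⟩ : ∃ j, s.2 j = false := by
    by_contra! h
    simp [zeros, h] at hk
  set y := Function.update (allOnes n) j false
  have hyA : A (s.2, y) := hA _ (zeros_update_allOnes j).le
  have hacc : fW w s.1 s.2 ≤ fW w s.2 y := by
    have hs2 := ones_add_zeros s.2
    have hy := ones_add_zeros y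
    rw [zeros_update_allOnes] at hy
    simp only [fW, hfirst, Bool.false_eq_true, if_false]
    split_ifs <;> omega
  have hne : (s.2, y) ≠ s := fun h => hs (h ▸ hyA)
  have htrans : transEA w s (s.2, y) = mutEA s.2 y := by
    rw [transEA, tlTrans_of_ne hne, if_pos ⟨rfl, hacc⟩]
  calc mutEA s.2 (allOnes n) = 1 / ((n : ℝ) - 1) * mutEA s.2 y := by
        refine mutEA_eq_of_hamming_eq_succ hn ?_
        rw [hamming_allOnes, hamming_update_allOnes hj]
    _ ≤ 1 / ((n : ℝ) - 1) * ∑ t ∈ univ.filter A, transEA w s t := by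
        rw [← htrans]
        exact mul_le_mul_of_nonneg_left
          (single_le_sum (fun t _ => hP.nonneg s t) (mem_filter.2 ⟨mem_univ _, hyA⟩)) hρ

lemma IsSubstochastic.of_mem_trans {P : TLState n → TLState n → ℝ}
    (hP : P ∈ ({transEA w, transRLS w} : Set (TLState n → TLState n → ℝ))) :
    IsSubstochastic P := by
  rcases hP with rfl | rfl
  exacts [isSubstochastic_mutEA.tlTrans w, isSubstochastic_mutRLS.tlTrans w]

lemma sum_optNeg_le_of_mem_trans {P : TLState n → TLState n → ℝ}
    (hP : P ∈ ({transEA w, transRLS w} : Set (TLState n → TLState n → ℝ))) (hw : w ≤ 0)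
    (hA : ∀ t : TLState n, zeros t.2 ≤ 1 → A t) {s : TLState n} (hs : ¬ A s)
    (hk : 2 ≤ zeros s.2) :
    ∑ t ∈ univ.filter (fun t => A t ∧ OptNeg t), P s t
      ≤ 1 / ((n : ℝ) - 1) * ∑ t ∈ univ.filter A, P s t := by
  have hρ : 0 ≤ 1 / ((n : ℝ) - 1) :=
    one_div_nonneg.2 (sub_nonneg.2 (Nat.one_le_cast.2 (by linarith [zeros_le s.2])))
  have hnonneg := (IsSubstochastic.of_mem_trans hP).nonneg
  rcases hP with rfl | rfl
  · exact sum_transEA_optNeg_le hw hA hs hk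
  · exact (sum_transRLS_optNeg_nonpos hs hk).trans
      (mul_nonneg hρ (sum_nonneg fun t _ => hnonneg s t))

end Optimum

section Average

variable {b : ℝ}

lemma card_filter_ones_snd_gt :
    (univ.filter fun s : TLState n => b * n < ones s.2).card
      = 2 ^ n * (univ.filter fun x : BitStr n => b * n < ones x).card := by
  rw [← univ_product_univ, filter_product_right fun x : BitStr n => b * n < ones x]
  simp

lemma card_filter_optNeg_le : (univ.filter (OptNeg (n := n))).card ≤ 2 ^ n := by
  have hsub : univ.filter (OptNeg (n := n)) ⊆ univ ×ˢ {allOnes n} := fun s hs =>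
    mem_product.2 ⟨mem_univ _, mem_singleton.2 (mem_filter.1 hs).2.1⟩
  simpa using card_le_card hsub

lemma average_le_three_div (hn : 2 ≤ n) (hb : b < 1 / 2) {f : TLState n → ℝ}
    (hf : ∀ s, f s ≤ (if OptNeg s then 1 else 0) + 1 / ((n : ℝ) - 1)) :
    (∑ s ∈ univ.filter (fun s : TLState n => b * n < ones s.2), f s)
        / (univ.filter fun s : TLState n => b * n < ones s.2).card ≤ 3 / n := by
  set Φ := univ.filter fun s : TLState n => b * n < ones s.2
  have hN : (2 : ℝ) ≤ n := by exact_mod_cast hn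
  have hcard : (2 : ℝ) ^ n * 2 ^ n ≤ 2 * Φ.card := by
    have := two_pow_le_two_mul_card_ones_gt (by omega : 0 < n) hb
    rw [card_filter_ones_snd_gt]
    exact_mod_cast (by linarith [Nat.mul_le_mul_left (2 ^ n) this] :
      2 ^ n * 2 ^ n ≤ 2 * (2 ^ n * _))
  have hpow : 2 * (n : ℝ) ≤ 2 ^ n := by
    have : n - 1 < 2 ^ (n - 1) := Nat.lt_two_pow_self
    have : 2 * n ≤ 2 ^ n := by
      rw [show n = n - 1 + 1 by omega, pow_succ]
      omega
    exact_mod_cast this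
  have hopt : ∑ s ∈ Φ, (if OptNeg s then (1 : ℝ) else 0) ≤ 2 ^ n := by
    rw [sum_boole]
    exact_mod_cast (card_le_card (filter_subset_filter _ (subset_univ Φ))).trans
      card_filter_optNeg_le
  have hρ : 1 / ((n : ℝ) - 1) ≤ 2 / n := by
    rw [div_le_div_iff₀ (by linarith) (by linarith)]
    linarith
  have hΦ : (0 : ℝ) < Φ.card := by nlinarith [pow_pos (two_pos (α := ℝ)) n]
  have hsum : ∑ s ∈ Φ, f s ≤ 2 ^ n + Φ.card * (2 / n) := by
    calc ∑ s ∈ Φ, f s ≤ ∑ s ∈ Φ, ((if OptNeg s then 1 else 0) + 2 / (n : ℝ)) :=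
          sum_le_sum fun s _ => (hf s).trans (by linarith)
      _ ≤ _ := by rw [sum_add_distrib, sum_const, nsmul_eq_mul]; linarith
  have hsmall : (2 : ℝ) ^ n ≤ Φ.card / n := by
    rw [le_div_iff₀ (by linarith)]
    nlinarith [pow_pos (two_pos (α := ℝ)) n]
  rw [div_le_iff₀ hΦ]
  calc ∑ s ∈ Φ, f s ≤ Φ.card / n + Φ.card * (2 / n) := by linarith
    _ = 3 / n * Φ.card := by ring

end Average

lemma two_le_rpow_of_two_rpow_one_div_le {c x : ℝ} (hc : 0 < c) (hx : (2 : ℝ) ^ (1 / c) ≤ x) :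
    2 ≤ x ^ c :=
  calc (2 : ℝ) = ((2 : ℝ) ^ (1 / c)) ^ c := by
        rw [one_div, Real.rpow_inv_rpow (by norm_num) hc.ne']
    _ ≤ x ^ c := Real.rpow_le_rpow (by positivity) hx hc.le

theorem stmt7_general (b c : ℝ) (hb : b ∈ Set.Ioo (0 : ℝ) (1 / 2))
    (hc : c ∈ Set.Ioo (0 : ℝ) (1 / 2)) (n : ℕ)
    (hn1 : (2 : ℝ) ^ (1 / c) ≤ n)
    (w : ℤ) (hw2 : w ≤ -1) :
    ∀ P ∈ ({transEA (n := n) w, transRLS (n := n) w} :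
        Set (TLState n → TLState n → ℝ)),
      1 - (∑ s ∈ Finset.univ.filter fun s : TLState n => b * n < (ones s.2 : ℝ),
            firstHitInProb P (fun t => (zeros t.2 : ℝ) < (n : ℝ) ^ c) OptNeg s) /
          ((Finset.univ.filter fun s : TLState n => b * n < (ones s.2 : ℝ)).card : ℝ)
        ≥ 1 - 17 * Real.logb 2 n / n := by
  intro P hP
  have hthreshold : (2 : ℝ) ≤ (n : ℝ) ^ c := two_le_rpow_of_two_rpow_one_div_le hc.1 hn1
  have hn : 2 ≤ n := by
    have : (1 : ℝ) < n := (Real.one_lt_rpow (by norm_num) (by simpa using hc.1)).trans_le hn1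
    exact_mod_cast this
  have hρ : 0 ≤ 1 / ((n : ℝ) - 1) :=
    one_div_nonneg.2 (sub_nonneg.2 (Nat.one_le_cast.2 (by omega)))
  have hbelow : ∀ t : TLState n, zeros t.2 ≤ 1 → (zeros t.2 : ℝ) < (n : ℝ) ^ c :=
    fun t ht => by linarith [(by exact_mod_cast ht : (zeros t.2 : ℝ) ≤ 1)]
  have habove : ∀ s : TLState n, ¬ (zeros s.2 : ℝ) < (n : ℝ) ^ c → 2 ≤ zeros s.2 :=
    fun s hs => by exact_mod_cast hthreshold.trans (not_lt.1 hs)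
  have hlog : 3 / (n : ℝ) ≤ 17 * Real.logb 2 n / n := by
    have : 1 ≤ Real.logb 2 n := by
      rw [Real.le_logb_iff_rpow_le (by norm_num) (by positivity)]
      exact_mod_cast (by omega : 2 ^ 1 ≤ n)
    gcongr
    linarith
  have hstep := fun s hs => sum_optNeg_le_of_mem_trans hP (by omega) hbelow hs (habove s hs)
  have := average_le_three_div hn hb.2 fun s =>
    (IsSubstochastic.of_mem_trans hP).firstHitInProb_le hρ hstep s
  linarith

/-- Let `b, c ∈ (0, 1/2)`, let `n ≥ max {2^{1/c}, 4^e}` with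
`e·(log₂ n)² ≤ n^c`, and let `-n ≤ w ≤ -1`. For the time-linkage RLS and
(1+1) EA on `f_w`, conditioned on the uniformly random initial state having
its current solution satisfy `|X^1| > b·n`, with probability at least
`1 - 17·log₂ n / n` the chain does not reach the global optimum strictly
before the first time at which the number of zero-bits of the current solution
is below `n^c` (i.e. the first state with fewer than `n^c` zero-bits, if it is
ever entered, is not the global optimum). -/
theorem stmt7 (b c : ℝ) (hb : b ∈ Set.Ioo (0 : ℝ) (1 / 2))
    (hc : c ∈ Set.Ioo (0 : ℝ) (1 / 2)) (n : ℕ)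
    (hn1 : (2 : ℝ) ^ (1 / c) ≤ n) (hn2 : (4 : ℝ) ^ eu ≤ n)
    (hn3 : eu * (Real.logb 2 n) ^ 2 ≤ (n : ℝ) ^ c)
    (w : ℤ) (hw1 : -(n : ℤ) ≤ w) (hw2 : w ≤ -1) :
    ∀ P ∈ ({transEA (n := n) w, transRLS (n := n) w} :
        Set (TLState n → TLState n → ℝ)),
      1 - (∑ s ∈ Finset.univ.filter fun s : TLState n => b * n < (ones s.2 : ℝ),
            firstHitInProb P (fun t => (zeros t.2 : ℝ) < (n : ℝ) ^ c) OptNeg s) /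
          ((Finset.univ.filter fun s : TLState n => b * n < (ones s.2 : ℝ)).card : ℝ)
        ≥ 1 - 17 * Real.logb 2 n / n :=
  stmt7_general b c hb hc n hn1 w hw2
end
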